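/- arXiv:1809.05453 — 3 statements merged into one kernel-verified Lean document; each statement's English description precedes it below -/
import Mathlib

section
/- Let (Ω, μ) be a probability space, G a finite simple graph, and for each vertex x of G let B_x ⊆ Ω be a measurable set. Then ∑_{x ∈ V(G)} μ(B_x) − ∑_{{x,y} ∈ E(G)} μ(B_x ∩ B_y) ≤ α(G) · μ(⋃_{x ∈ V(G)} B_x). -/
/-!
Both sides are integrals: for `S ω = {x | ω ∈ B x}`, the left side is the integral of
`#S ω - #(edges inside S ω)`. Deleting one endpoint of every edge inside a vertex set `S`
leaves an independent set, so `#S ≤ α(G) + #(edges inside S)`; and `S ω` is empty off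
`⋃ x, B x`. Integrating this pointwise bound gives the theorem.
-/

open MeasureTheory Finset

namespace SimpleGraph

theorem card_le_add_card_edgeFinset_inter_sym2 {V : Type*} [DecidableEq V] (G : SimpleGraph V)
    [Fintype G.edgeSet] {α : ℕ} (hα : ∀ T : Finset V, G.IsIndepSet T → #T ≤ α)
    (S : Finset V) :
    #S ≤ α + #(G.edgeFinset ∩ S.sym2) := by
  set T := S \ (G.edgeFinset ∩ S.sym2).image fun e => e.out.1
  have hT : G.IsIndepSet T := by
    intro x hx y hy _ hxy
    have he : s(x, y) ∈ G.edgeFinset ∩ S.sym2 := by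
      simp [mem_sym2_iff, hxy, (mem_sdiff.1 hx).1, (mem_sdiff.1 hy).1]
    rcases Sym2.mem_iff.1 (Sym2.out_fst_mem s(x, y)) with h | h
    · exact (mem_sdiff.1 hx).2 (mem_image.2 ⟨_, he, h⟩)
    · exact (mem_sdiff.1 hy).2 (mem_image.2 ⟨_, he, h⟩)
  calc #S ≤ #T + #((G.edgeFinset ∩ S.sym2).image fun e => e.out.1) :=
        card_le_card_sdiff_add_card
    _ ≤ α + #(G.edgeFinset ∩ S.sym2) := add_le_add (hα T hT) card_image_le

end SimpleGraph

section

variable {Ω ι : Type*} {s : Finset ι} {A : ι → Set Ω}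
  [∀ ω, DecidablePred (ω ∈ A ·)]

theorem card_filter_mem_eq_sum_indicator (ω : Ω) :
    (#{i ∈ s | ω ∈ A i} : ℝ) = ∑ i ∈ s, (A i).indicator 1 ω := by
  simp [Set.indicator_apply]

variable [MeasurableSpace Ω] (μ : Measure Ω) [IsFiniteMeasure μ]

theorem integrable_card_filter_mem (hA : ∀ i ∈ s, MeasurableSet (A i)) :
    Integrable (fun ω => (#{i ∈ s | ω ∈ A i} : ℝ)) μ := by
  simp_rw [card_filter_mem_eq_sum_indicator]
  exact integrable_finsetSum _ fun i hi => (integrable_const 1).indicator (hA i hi)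

theorem sum_measureReal_eq_integral_card (hA : ∀ i ∈ s, MeasurableSet (A i)) :
    ∑ i ∈ s, μ.real (A i) = ∫ ω, (#{i ∈ s | ω ∈ A i} : ℝ) ∂μ := by
  simp_rw [card_filter_mem_eq_sum_indicator]
  rw [integral_finsetSum _ fun i hi => (integrable_const 1).indicator (hA i hi)]
  exact sum_congr rfl fun i hi => (integral_indicator_one (hA i hi)).symm

end

section

variable {Ω V : Type*} (B : V → Set Ω)

theorem measurableSet_setOf_forall_mem_sym2 [MeasurableSpace Ω] (hB : ∀ x, MeasurableSet (B x))
    (e : Sym2 V) : MeasurableSet {ω | ∀ v ∈ e, ω ∈ B v} := by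
  induction e using Sym2.ind with
  | _ x y => simpa [Set.ofPred_and] using (hB x).inter (hB y)

theorem Sym2.lift_measure_inter_toReal [MeasurableSpace Ω] (μ : Measure Ω)
    (h : ∀ x y, (μ (B x ∩ B y)).toReal = (μ (B y ∩ B x)).toReal) (e : Sym2 V) :
    Sym2.lift ⟨fun x y => (μ (B x ∩ B y)).toReal, h⟩ e =
      μ.real {ω | ∀ v ∈ e, ω ∈ B v} := by
  induction e using Sym2.ind with
  | _ x y => simp [Measure.real]

theorem SimpleGraph.card_sub_card_edgeFinset_filter_le_indicator [Fintype V] [DecidableEq V]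
    (G : SimpleGraph V) [Fintype G.edgeSet] {α : ℕ}
    (hα : ∀ T : Finset V, G.IsIndepSet T → #T ≤ α) (ω : Ω) [DecidablePred (ω ∈ B ·)]
    [DecidablePred fun e : Sym2 V => ∀ v ∈ e, ω ∈ B v] :
    (#{x | ω ∈ B x} : ℝ) - #{e ∈ G.edgeFinset | ∀ v ∈ e, ω ∈ B v}
      ≤ (⋃ x, B x).indicator (fun _ => (α : ℝ)) ω := by
  set S : Finset V := {x | ω ∈ B x}
  have hS : {e ∈ G.edgeFinset | ∀ v ∈ e, ω ∈ B v} = G.edgeFinset ∩ S.sym2 := by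
    ext e; simp [S, mem_sym2_iff]
  by_cases hω : ω ∈ ⋃ x, B x
  · rw [Set.indicator_of_mem hω, hS, sub_le_iff_le_add]
    exact_mod_cast G.card_le_add_card_edgeFinset_inter_sym2 hα S
  · have hS_empty : S = ∅ := by
      ext x; simpa [S] using fun hx => hω (Set.mem_iUnion.2 ⟨x, hx⟩)
    simp [Set.indicator_of_notMem hω, hS_empty]

end

/-- For a probability measure `μ`, a finite simple graph `G` and measurable sets `B x`
indexed by the vertices: `∑_x μ(B x) − ∑_{{x,y} ∈ E(G)} μ(B x ∩ B y) ≤ α(G) · μ(⋃ x, B x)`. -/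
theorem stmt_3 {Ω : Type*} [MeasurableSpace Ω] (μ : Measure Ω) [IsProbabilityMeasure μ]
    {V : Type*} [Fintype V] (G : SimpleGraph V) [Fintype G.edgeSet]
    (B : V → Set Ω) (hB : ∀ x, MeasurableSet (B x))
    (α : ℕ)
    (hα : IsGreatest {n : ℕ | ∃ T : Finset V,
      (T : Set V).Pairwise (fun a b => ¬ G.Adj a b) ∧ T.card = n} α) :
    ∑ x : V, (μ (B x)).toReal
      - ∑ e ∈ G.edgeFinset,
          Sym2.lift ⟨fun x y => (μ (B x ∩ B y)).toReal,
            fun x y => by simp only []; rw [Set.inter_comm]⟩ e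
      ≤ (α : ℝ) * (μ (⋃ x : V, B x)).toReal := by
  classical
  have hindep : ∀ T : Finset V, G.IsIndepSet T → #T ≤ α := fun T hT => hα.2 ⟨T, hT, rfl⟩
  have hE := measurableSet_setOf_forall_mem_sym2 B hB
  have hint₁ := integrable_card_filter_mem (s := univ) μ fun x _ => hB x
  have hint₂ := integrable_card_filter_mem (s := G.edgeFinset) μ fun e _ => hE e
  calc _ = ∫ ω, (#{x | ω ∈ B x} : ℝ) - #{e ∈ G.edgeFinset | ∀ v ∈ e, ω ∈ B v}
          ∂μ := by
        rw [sum_congr rfl fun e _ => Sym2.lift_measure_inter_toReal B μ _ e]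
        refine .trans ?_ (integral_sub hint₁ hint₂).symm
        exact congrArg₂ (· - ·) (sum_measureReal_eq_integral_card μ fun x _ => hB x)
          (sum_measureReal_eq_integral_card μ fun e _ => hE e)
    _ ≤ ∫ ω, (⋃ x, B x).indicator (fun _ => (α : ℝ)) ω ∂μ :=
        integral_mono (hint₁.sub hint₂) ((integrable_const _).indicator (.iUnion hB))
          fun ω => G.card_sub_card_edgeFinset_filter_le_indicator B hindep ω
    _ = _ := by
        rw [integral_indicator_const _ (.iUnion hB), smul_eq_mul, mul_comm, measureReal_def]
end

section
/- Let (Ω, μ) be a probability space and (B_x)_{x ∈ I} a finite family of measurable subsets of Ω such that any four distinct sets among them have empty intersection. Then ∑_{x ∈ I} μ(B_x) ≤ 2 μ(⋃_{x ∈ I} B_x) + ∑_{{x,y,z} ⊆ I distinct} μ(B_x ∩ B_y ∩ B_z). -/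
open MeasureTheory Finset
open scoped ENNReal

/-!
A point lying in exactly `k` of the sets has `k ≤ 3`, and for such `k` we have
`k ≤ 2 + k.choose 3`; the point lies in exactly `k.choose 3` of the triple intersections.
Integrating this pointwise inequality between indicator functions gives the bound.
-/

lemma Nat.le_two_add_choose_three {n : ℕ} (hn : n ≤ 3) : n ≤ 2 + n.choose 3 := by
  interval_cases n <;> decide

section
variable {Ω ι : Type*} {B : ι → Set Ω} {ω : Ω} {T : Finset ι}

lemma card_le_three_of_forall_mem
    (h4 : ∀ x₁ x₂ x₃ x₄ : ι, x₁ ≠ x₂ → x₁ ≠ x₃ → x₁ ≠ x₄ → x₂ ≠ x₃ → x₂ ≠ x₄ → x₃ ≠ x₄ →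
      B x₁ ∩ B x₂ ∩ B x₃ ∩ B x₄ = ∅)
    (hT : ∀ x ∈ T, ω ∈ B x) : #T ≤ 3 := by
  by_contra! h
  obtain ⟨a, b, c, d, ha, hb, hc, hd, hab, hac, had, hbc, hbd, hcd⟩ := three_lt_card_iff.1 h
  have hω : ω ∈ B a ∩ B b ∩ B c ∩ B d := ⟨⟨⟨hT a ha, hT b hb⟩, hT c hc⟩, hT d hd⟩
  simp [h4 a b c d hab hac had hbc hbd hcd] at hω

variable [Fintype ι]

lemma sum_indicator_one_eq_card (hT : ∀ x, x ∈ T ↔ ω ∈ B x) :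
    ∑ x, (B x).indicator (1 : Ω → ℝ≥0∞) ω = #T := by
  classical
  simp [Set.indicator_apply, ← hT]

lemma sum_indicator_one_biInter_eq_choose (hT : ∀ x, x ∈ T ↔ ω ∈ B x) (k : ℕ) :
    ∑ s ∈ univ.powersetCard k, (⋂ x ∈ s, B x).indicator (1 : Ω → ℝ≥0∞) ω = (#T).choose k := by
  classical
  rw [← card_powersetCard]
  have hmem (s : Finset ι) : ω ∈ ⋂ x ∈ s, B x ↔ s ⊆ T := by
    simp [Finset.subset_iff, hT]
  simp only [Set.indicator_apply, hmem, Pi.one_apply, sum_boole]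
  congr 2
  ext s
  simp [mem_powersetCard, and_comm]

lemma sum_indicator_one_le_of_inter_four_eq_empty
    (h4 : ∀ x₁ x₂ x₃ x₄ : ι, x₁ ≠ x₂ → x₁ ≠ x₃ → x₁ ≠ x₄ → x₂ ≠ x₃ → x₂ ≠ x₄ → x₃ ≠ x₄ →
      B x₁ ∩ B x₂ ∩ B x₃ ∩ B x₄ = ∅) (ω : Ω) :
    ∑ x, (B x).indicator (1 : Ω → ℝ≥0∞) ω
      ≤ 2 * (⋃ x, B x).indicator 1 ω
        + ∑ s ∈ univ.powersetCard 3, (⋂ x ∈ s, B x).indicator 1 ω := by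
  classical
  set T : Finset ι := {x | ω ∈ B x}
  have hT (x : ι) : x ∈ T ↔ ω ∈ B x := by simp [T]
  rw [sum_indicator_one_eq_card hT, sum_indicator_one_biInter_eq_choose hT]
  by_cases hω : ω ∈ ⋃ x, B x
  · rw [Set.indicator_of_mem hω, Pi.one_apply, mul_one]
    exact_mod_cast Nat.le_two_add_choose_three
      (card_le_three_of_forall_mem h4 fun x hx => (hT x).1 hx)
  · have hT0 : T = ∅ := by
      ext x
      simpa [hT] using fun hx => hω (Set.mem_iUnion_of_mem x hx)
    simp [hT0]

theorem sum_measure_le_of_inter_four_eq_empty [MeasurableSpace Ω] (μ : Measure Ω)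
    (hB : ∀ x, MeasurableSet (B x))
    (h4 : ∀ x₁ x₂ x₃ x₄ : ι, x₁ ≠ x₂ → x₁ ≠ x₃ → x₁ ≠ x₄ → x₂ ≠ x₃ → x₂ ≠ x₄ → x₃ ≠ x₄ →
      B x₁ ∩ B x₂ ∩ B x₃ ∩ B x₄ = ∅) :
    ∑ x, μ (B x) ≤ 2 * μ (⋃ x, B x) + ∑ s ∈ univ.powersetCard 3, μ (⋂ x ∈ s, B x) := by
  have hU : MeasurableSet (⋃ x, B x) := .iUnion hB
  have hI (s : Finset ι) : MeasurableSet (⋂ x ∈ s, B x) := s.measurableSet_biInter fun x _ => hB x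
  calc ∑ x, μ (B x) = ∫⁻ ω, ∑ x, (B x).indicator 1 ω ∂μ := by
        rw [lintegral_finsetSum _ fun x _ => measurable_one.indicator (hB x)]
        simp_rw [lintegral_indicator_one (hB _)]
    _ ≤ ∫⁻ ω, 2 * (⋃ x, B x).indicator 1 ω
          + ∑ s ∈ univ.powersetCard 3, (⋂ x ∈ s, B x).indicator 1 ω ∂μ :=
        lintegral_mono (sum_indicator_one_le_of_inter_four_eq_empty h4)
    _ = 2 * μ (⋃ x, B x) + ∑ s ∈ univ.powersetCard 3, μ (⋂ x ∈ s, B x) := by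
        rw [lintegral_add_left ((measurable_one.indicator hU).const_mul 2),
          lintegral_const_mul _ (measurable_one.indicator hU), lintegral_indicator_one hU,
          lintegral_finsetSum _ fun s _ => measurable_one.indicator (hI s)]
        simp_rw [lintegral_indicator_one (hI _)]

end

theorem stmt_10_general {Ω : Type*} [MeasurableSpace Ω] (μ : Measure Ω) [IsProbabilityMeasure μ]
    {ι : Type*} [Fintype ι]
    (B : ι → Set Ω) (hB : ∀ x, MeasurableSet (B x))
    (h4 : ∀ x₁ x₂ x₃ x₄ : ι, x₁ ≠ x₂ → x₁ ≠ x₃ → x₁ ≠ x₄ → x₂ ≠ x₃ → x₂ ≠ x₄ → x₃ ≠ x₄ →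
      B x₁ ∩ B x₂ ∩ B x₃ ∩ B x₄ = ∅) :
    ∑ x : ι, (μ (B x)).toReal
      ≤ 2 * (μ (⋃ x : ι, B x)).toReal
        + ∑ s ∈ Finset.univ.powersetCard 3, (μ (⋂ x ∈ s, B x)).toReal := by
  have hfin (s : Set Ω) : μ s ≠ ∞ := measure_ne_top μ s
  have htriple : ∑ s ∈ univ.powersetCard 3, μ (⋂ x ∈ s, B x) ≠ ∞ :=
    ENNReal.sum_ne_top.2 fun s _ => hfin _
  calc ∑ x, (μ (B x)).toReal = (∑ x, μ (B x)).toReal :=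
        (ENNReal.toReal_sum fun x _ => hfin _).symm
    _ ≤ (2 * μ (⋃ x, B x) + ∑ s ∈ univ.powersetCard 3, μ (⋂ x ∈ s, B x)).toReal :=
        ENNReal.toReal_mono (by finiteness) (sum_measure_le_of_inter_four_eq_empty μ hB h4)
    _ = _ := by
        rw [ENNReal.toReal_add (by finiteness) (by finiteness), ENNReal.toReal_mul,
          ENNReal.toReal_sum fun s _ => hfin _]
        norm_num

/-- If any four distinct sets among the `B x` have empty intersection, then
`∑ μ(B x) ≤ 2 μ(⋃ B x) + ∑_{triples} μ(B x ∩ B y ∩ B z)`. -/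
theorem stmt_10 {Ω : Type*} [MeasurableSpace Ω] (μ : Measure Ω) [IsProbabilityMeasure μ]
    {ι : Type*} [Fintype ι] [DecidableEq ι]
    (B : ι → Set Ω) (hB : ∀ x, MeasurableSet (B x))
    (h4 : ∀ x₁ x₂ x₃ x₄ : ι, x₁ ≠ x₂ → x₁ ≠ x₃ → x₁ ≠ x₄ → x₂ ≠ x₃ → x₂ ≠ x₄ → x₃ ≠ x₄ →
      B x₁ ∩ B x₂ ∩ B x₃ ∩ B x₄ = ∅) :
    ∑ x : ι, (μ (B x)).toReal
      ≤ 2 * (μ (⋃ x : ι, B x)).toReal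
        + ∑ s ∈ Finset.univ.powersetCard 3, (μ (⋂ x ∈ s, B x)).toReal :=
  stmt_10_general μ B hB h4
end

section
/- Consider the seven points V₁ = (0,0), V₂ = (√3/2, 1/2), V₃ = (√3/2, −1/2), V₄ = (√3, 0), V₅ = (1, 0), V₆ = (√3/2 + 1, 1/2), V₇ = (√3/2 + 1, −1/2) in ℝ², with the unit distance graph structure (edges are pairs at Euclidean distance 1). The independence number of this graph is exactly 3. -/
/-!
The triangles `V₁V₂V₃` and `V₅V₆V₇` together with the single point `V₄` cover the seven
points; an independent set meets each triangle in at most one point, so it has at most three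
points. Conversely `V₁, V₄, V₆` are pairwise at distances `√3`, `√(2 + √3)` and `√(2 - √3)`.
-/

theorem Set.Pairwise.inter_subsingleton {α : Type*} {r : α → α → Prop} {S T : Set α}
    (hS : S.Pairwise r) (hT : T.Pairwise fun a b => ¬ r a b) : (S ∩ T).Subsingleton :=
  fun _ hx _ hy => by_contra fun hxy => hT hx.2 hy.2 hxy (hS hx.1 hy.1 hxy)

theorem Set.ncard_le_card_of_pairwise_of_subset_biUnion {α : Type*} {r : α → α → Prop}
    {S : Set α} (𝒞 : Finset (Set α)) (hS : S.Pairwise r) (hcover : S ⊆ ⋃ T ∈ 𝒞, T)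
    (hcliques : ∀ T ∈ 𝒞, T.Pairwise fun a b => ¬ r a b) : S.ncard ≤ 𝒞.card := by
  have hmeet (T : Set α) (hT : T ∈ 𝒞) : (S ∩ T).Subsingleton :=
    hS.inter_subsingleton (hcliques T hT)
  have hS_eq : S = ⋃ T ∈ 𝒞, S ∩ T := by
    rw [← Set.inter_iUnion₂]
    exact (Set.inter_eq_left.2 hcover).symm
  calc S.ncard = (⋃ T ∈ 𝒞, S ∩ T).ncard := congrArg Set.ncard hS_eq
    _ ≤ ∑ T ∈ 𝒞, (S ∩ T).ncard := 𝒞.set_ncard_biUnion_le _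
    _ ≤ ∑ _T ∈ 𝒞, 1 :=
      Finset.sum_le_sum fun T hT => (Set.ncard_le_one (hmeet T hT).finite).2 (hmeet T hT)
    _ = 𝒞.card := by simp

theorem Set.pairwise_triple {α : Type*} {r : α → α → Prop} (hr : ∀ ⦃x y⦄, r x y → r y x)
    {a b c : α} (hab : r a b) (hac : r a c) (hbc : r b c) : ({a, b, c} : Set α).Pairwise r := by
  simp [Set.pairwise_insert, hab, hac, hbc, hr hab, hr hac, hr hbc]

theorem EuclideanSpace.dist_eq_one_iff_fin_two (a b c d : ℝ) :
    dist !₂[a, b] !₂[c, d] = 1 ↔ (a - c) ^ 2 + (b - d) ^ 2 = 1 := by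
  simp [EuclideanSpace.dist_eq, Fin.sum_univ_two, Real.dist_eq, sq_abs]

theorem EuclideanSpace.pairwise_dist_eq_one_triangle (x : ℝ) :
    ({!₂[x, 0], !₂[Real.sqrt 3 / 2 + x, 1 / 2], !₂[Real.sqrt 3 / 2 + x, -(1 / 2)]} :
      Set (EuclideanSpace ℝ (Fin 2))).Pairwise fun a b => dist a b = 1 := by
  have hs : Real.sqrt 3 ^ 2 = 3 := Real.sq_sqrt (by norm_num)
  refine Set.pairwise_triple (fun _ _ h => (dist_comm _ _).trans h) ?_ ?_ ?_ <;>
    rw [EuclideanSpace.dist_eq_one_iff_fin_two] <;> nlinarith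

/-- The independence number of the unit distance graph on the seven points
`V₁,…,V₇` of the configuration `G₁(0)` is exactly 3. -/
theorem stmt_16 :
    let V₁ : EuclideanSpace ℝ (Fin 2) := !₂[0, 0]
    let V₂ : EuclideanSpace ℝ (Fin 2) := !₂[Real.sqrt 3 / 2, 1 / 2]
    let V₃ : EuclideanSpace ℝ (Fin 2) := !₂[Real.sqrt 3 / 2, -(1 / 2)]
    let V₄ : EuclideanSpace ℝ (Fin 2) := !₂[Real.sqrt 3, 0]
    let V₅ : EuclideanSpace ℝ (Fin 2) := !₂[1, 0]
    let V₆ : EuclideanSpace ℝ (Fin 2) := !₂[Real.sqrt 3 / 2 + 1, 1 / 2]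
    let V₇ : EuclideanSpace ℝ (Fin 2) := !₂[Real.sqrt 3 / 2 + 1, -(1 / 2)]
    let Vs : Set (EuclideanSpace ℝ (Fin 2)) := {V₁, V₂, V₃, V₄, V₅, V₆, V₇}
    IsGreatest {n : ℕ | ∃ S : Set (EuclideanSpace ℝ (Fin 2)), S ⊆ Vs ∧
      S.Pairwise (fun a b => dist a b ≠ 1) ∧ S.ncard = n} 3 := by
  intro V₁ V₂ V₃ V₄ V₅ V₆ V₇ Vs
  have hs : Real.sqrt 3 ^ 2 = 3 := Real.sq_sqrt (by norm_num)
  have dist_ne_one {a b c d : ℝ} (h : (a - c) ^ 2 + (b - d) ^ 2 ≠ 1) : dist !₂[a, b] !₂[c, d] ≠ 1 :=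
    (EuclideanSpace.dist_eq_one_iff_fin_two a b c d).not.2 h
  constructor
  · refine ⟨{V₁, V₄, V₆}, ?_, ?_, ?_⟩
    · intro x hx
      simp only [Vs, Set.mem_insert_iff, Set.mem_singleton_iff] at hx ⊢
      tauto
    · exact Set.pairwise_triple (fun _ _ h => (dist_comm _ _).trans_ne h)
        (dist_ne_one (by nlinarith)) (dist_ne_one (by nlinarith)) (dist_ne_one (by nlinarith))
    · refine Set.ncard_eq_three.2 ⟨V₁, V₄, V₆, ?_, ?_, ?_, rfl⟩ <;> intro h <;>
        have := congrArg (· 0) h <;> simp [V₁, V₄, V₆] at this <;> nlinarith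
  · rintro n ⟨S, hSV, hS, rfl⟩
    classical
    calc S.ncard ≤ ({{V₁, V₂, V₃}, {V₄}, {V₅, V₆, V₇}} : Finset (Set _)).card := by
          refine Set.ncard_le_card_of_pairwise_of_subset_biUnion _ hS (hSV.trans ?_) ?_
          · intro x hx
            simp only [Vs, Finset.set_biUnion_insert, Finset.set_biUnion_singleton,
              Set.mem_union, Set.mem_insert_iff, Set.mem_singleton_iff] at hx ⊢
            tauto
          · simp only [Finset.mem_insert, Finset.mem_singleton, forall_eq_or_imp, forall_eq]
            refine ⟨?_, Set.pairwise_singleton _ _, ?_⟩ <;>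
              refine Set.Pairwise.mono' (fun _ _ => not_not_intro) ?_
            · simpa only [add_zero] using EuclideanSpace.pairwise_dist_eq_one_triangle 0
            · exact EuclideanSpace.pairwise_dist_eq_one_triangle 1
      _ ≤ 3 := Finset.card_le_three
end
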